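/- Suppose ⟨C_α : α ∈ A⟩ is a disjoint club sequence on ω₂: A is a subset of {α < ω₂ : cf(α) = ω₁}, each C_α is a club subset of [α]^ω, and C_α ∩ C_β = ∅ for distinct α, β ∈ A. Then the set A ∪ {γ < ω₂ : cf(γ) = ω} does not contain a club subset of ω₂. -/

import Mathlib

/-- The first uncountable ordinal. -/
noncomputable def ω1 : Ordinal.{0} := (Cardinal.aleph 1).ord
/-- The second uncountable ordinal. -/
noncomputable def ω2 : Ordinal.{0} := (Cardinal.aleph 2).ord

-- The order type of a set of ordinals (correct whenever the set is small, e.g. countable).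
open Classical in
noncomputable def otp (σ : Set Ordinal.{0}) : Ordinal.{0} :=
  if h : ∃ o : Ordinal.{0}, Ordinal.lift.{1, 0} o =
      Ordinal.type ((· < ·) : σ → σ → Prop) then h.choose else 0

/-- `σ ∈ [α]^ω`: σ is a countably infinite subset of (the ordinals below) α. -/
def MemCtble (α : Ordinal.{0}) (σ : Set Ordinal.{0}) : Prop :=
  σ.Countable ∧ σ.Infinite ∧ ∀ x ∈ σ, x < α

/-- `C` is a club subset of `[α]^ω`: all members lie in `[α]^ω`, `C` is closed under
unions of increasing ω-chains, and `C` is cofinal under inclusion. -/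
def IsClubIn (α : Ordinal.{0}) (C : Set (Set Ordinal.{0})) : Prop :=
  (∀ σ ∈ C, MemCtble α σ) ∧
  (∀ f : ℕ → Set Ordinal.{0}, (∀ n, f n ∈ C) → (∀ n, f n ⊆ f (n + 1)) →
    (⋃ n, f n) ∈ C) ∧
  (∀ σ, MemCtble α σ → ∃ τ ∈ C, σ ⊆ τ)

/-- `S` is stationary in `[α]^ω`: it meets every club of `[α]^ω`. -/
def StatIn (α : Ordinal.{0}) (S : Set (Set Ordinal.{0})) : Prop :=
  ∀ C, IsClubIn α C → (S ∩ C).Nonempty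

/-- `C` is a closed unbounded subset of the ordinal `κ`. -/
def IsClubBelow (κ : Ordinal.{0}) (C : Set Ordinal.{0}) : Prop :=
  (∀ x ∈ C, x < κ) ∧ (∀ β < κ, ∃ x ∈ C, β ≤ x) ∧
  (∀ S : Set Ordinal.{0}, S ⊆ C → S.Nonempty → sSup S < κ → sSup S ∈ C)

/-- `S` is a stationary subset of the ordinal `κ`: it meets every club of `κ`. -/
def StatBelow (κ : Ordinal.{0}) (S : Set Ordinal.{0}) : Prop :=
  ∀ C, IsClubBelow κ C → (S ∩ C).Nonempty

/-- The tilde operation: `α ∈ tilde X` iff `ω1 ≤ α < ω2` and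
`{σ ∈ [α]^ω : otp σ ∈ X}` contains a club of `[α]^ω`. -/
def tilde (X : Set Ordinal.{0}) : Set Ordinal.{0} :=
  {α | ω1 ≤ α ∧ α < ω2 ∧ ∃ C, IsClubIn α C ∧ C ⊆ {σ | otp σ ∈ X}}

/-- `σ ∩ ω₁` equals the ordinal `γ` (i.e. as sets, `σ ∩ ω₁ = {x : x < γ}`). -/
def MeetO1 (σ : Set Ordinal.{0}) (γ : Ordinal.{0}) : Prop :=
  σ ∩ Set.Iio ω1 = Set.Iio γ

/-!
Suppose `D ⊆ A ∪ cof(ω)` is a club of `ω₂`. Build a continuous increasing `ω₁`-chain `M_j` of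
countable subsets of `ω₂`, where `M_{j+1}` contains `j`, the values `e_δ ξ` of fixed surjections
`e_δ : ω₁ → δ` for `δ, ξ ∈ M_j`, a point of `D` above `sup M_j`, and the index `W(M_j)` of the
club `C_δ` containing `M_j` (if any). The union of the chain is an initial segment `β < ω₂`, the
supremum of a strictly increasing `ω₁`-sequence, so `cof β = ω₁`; as a limit of points of `D`,
`β ∈ D`, hence `β ∈ A`. Since the chain is continuous and absorbs every countable subset of `β`,
some stage `M_j` lies in the club `C_β`. By disjointness `W(M_j) = β`, which puts `β` into
`M_{j+1} ⊆ β`.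
-/

universe u

open Ordinal Cardinal Set

lemma ω1_eq_omega_one : ω1 = ω_ 1 := ord_aleph 1

lemma ω2_eq_omega_two : ω2 = ω_ 2 := ord_aleph 2

lemma omega0_lt_ω1 : ω < ω1 := ω1_eq_omega_one ▸ omega0_lt_omega_one

lemma ω1_lt_ω2 : ω1 < ω2 := by
  rw [ω1_eq_omega_one, ω2_eq_omega_two, omega_lt_omega]
  norm_num

lemma isSuccLimit_ω1 : Order.IsSuccLimit ω1 := ω1_eq_omega_one ▸ isSuccLimit_omega 1

lemma isSuccLimit_ω2 : Order.IsSuccLimit ω2 := ω2_eq_omega_two ▸ isSuccLimit_omega 2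

lemma cof_ω1 : ω1.cof = ℵ₁ := ω1_eq_omega_one ▸ cof_omega_one

lemma cof_ω2 : ω2.cof = ℵ_ 2 := by
  rw [ω2_eq_omega_two, show (2 : Ordinal) = 1 + 1 by norm_num, cof_omega_add_one]

lemma aleph0_lt_cof_ω1 : ℵ₀ < ω1.cof := cof_ω1 ▸ aleph0_lt_aleph_one

lemma aleph0_lt_cof_ω2 : ℵ₀ < ω2.cof := by
  rw [cof_ω2]
  exact aleph0_lt_aleph_one.trans (aleph_lt_aleph.2 one_lt_two)

lemma card_le_card_ω1 {δ : Ordinal.{0}} (hδ : δ < ω2) : δ.card ≤ ω1.card := by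
  rw [ω2_eq_omega_two, lt_omega_iff_card_lt, ← one_add_one_eq_two, ← succ_aleph,
    Order.lt_succ_iff] at hδ
  rwa [ω1_eq_omega_one, card_omega]

lemma countable_Iio_of_lt_ω1 {i : Ordinal.{0}} (hi : i < ω1) : (Iio i).Countable := by
  rw [← le_aleph0_iff_set_countable, Cardinal.mk_Iio_ordinal, lift_le_aleph0, ← lt_aleph_one_iff,
    ← lt_omega_iff_card_lt, ← ω1_eq_omega_one]
  exact hi

lemma infinite_Iio_omega0 : (Iio ω : Set Ordinal.{0}).Infinite :=
  infinite_of_injective_forall_mem Nat.cast_injective natCast_lt_omega0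

lemma Set.Countable.sSup_lt {s : Set Ordinal.{u}} {a : Ordinal.{u}} (hs : s.Countable)
    (ha : ℵ₀ < a.cof) (h : ∀ x ∈ s, x < a) : sSup s < a :=
  sSup_lt_of_lt_cof (hs.le_aleph0.trans_lt (by rwa [← lift_cof, aleph0_lt_lift])) h

lemma exists_surjOn_Iio_of_card_le {δ α : Ordinal.{u}} (h : δ.card ≤ α.card) :
    ∃ e : Ordinal.{u} → Ordinal.{u}, SurjOn e (Iio α) (Iio δ) := by
  obtain ⟨emb⟩ : Nonempty (Iio δ ↪ Iio α) := by
    rwa [← Cardinal.le_def, Cardinal.mk_Iio_ordinal, Cardinal.mk_Iio_ordinal, Cardinal.lift_le]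
  have hinj : Function.Injective fun y => (emb y : Ordinal) :=
    Subtype.val_injective.comp emb.injective
  exact ⟨Function.extend (fun y => (emb y : Ordinal)) Subtype.val 0,
    fun η hη => ⟨emb ⟨η, hη⟩, (emb _).2, hinj.extend_apply _ _ _⟩⟩

lemma IsClubBelow.exists_mem_gt {κ : Ordinal.{0}} {D : Set Ordinal.{0}} (hD : IsClubBelow κ D)
    (hκ : Order.IsSuccLimit κ) {b : Ordinal.{0}} (hb : b < κ) : ∃ d ∈ D, b < d := by
  obtain ⟨d, hd, hbd⟩ := hD.2.1 (b + 1) (hκ.add_one_lt hb)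
  exact ⟨d, hd, (lt_add_one b).trans_le hbd⟩

lemma IsClubBelow.mem_of_forall_lt_exists_mem {κ : Ordinal.{0}} {D : Set Ordinal.{0}}
    (hD : IsClubBelow κ D) {β : Ordinal.{0}} (hβ : β < κ) (hβ0 : β ≠ 0)
    (h : ∀ x < β, ∃ d ∈ D, x < d ∧ d < β) : β ∈ D := by
  obtain ⟨d, hd, -, hdβ⟩ := h 0 (pos_iff_ne_zero.2 hβ0)
  have hsup : sSup (D ∩ Iio β) = β :=
    csSup_eq_of_forall_le_of_forall_lt_exists_gt ⟨d, hd, hdβ⟩ (fun x hx => hx.2.le)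
      fun x hx => by obtain ⟨d, hd, hxd, hdβ⟩ := h x hx; exact ⟨d, ⟨hd, hdβ⟩, hxd⟩
  have := hD.2.2 (D ∩ Iio β) inter_subset_left ⟨d, hd, hdβ⟩ (by rwa [hsup])
  rwa [hsup] at this

lemma Monotone.exists_lt_ω1_subset_of_countable {α : Type*} {M : Ordinal.{0} → Set α}
    (hM : Monotone M) {s : Set α} (hs : s.Countable) (h : ∀ x ∈ s, ∃ j < ω1, x ∈ M j) : ∃ j < ω1, s ⊆ M j := by
  choose! stage hstage hmem using h
  have hbdd : BddAbove (stage '' s) := ⟨ω1, forall_mem_image.2 fun x hx => (hstage x hx).le⟩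
  exact ⟨sSup (stage '' s), (hs.image stage).sSup_lt aleph0_lt_cof_ω1 (forall_mem_image.2 hstage),
    fun x hx => hM (le_csSup hbdd (mem_image_of_mem stage hx)) (hmem x hx)⟩

lemma IsClubIn.exists_mem_of_continuous {β : Ordinal.{0}} {C : Set (Set Ordinal.{0})}
    (hC : IsClubIn β C) {M : Ordinal.{0} → Set Ordinal.{0}} (hM : Monotone M)
    (hcont : ∀ r : ℕ → Ordinal.{0}, M (⨆ n, r n) = ⋃ n, M (r n))
    (hmem : ∀ j ∈ Ico ω ω1, MemCtble β (M j))
    (habsorb : ∀ σ, MemCtble β σ → ∃ j < ω1, σ ⊆ M j) : ∃ j < ω1, M j ∈ C := by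
  obtain ⟨hCmem, hCunion, hCcofinal⟩ := hC
  have hnext : ∀ j : Ico ω ω1, ∃ k : Ico ω ω1, ∃ τ ∈ C, M j ⊆ τ ∧ τ ⊆ M k := by
    rintro ⟨j, hj⟩
    obtain ⟨τ, hτC, hjτ⟩ := hCcofinal _ (hmem j hj)
    obtain ⟨k, hk, hτk⟩ := habsorb τ (hCmem τ hτC)
    exact ⟨⟨max k ω, le_max_right _ _, max_lt hk omega0_lt_ω1⟩, τ, hτC, hjτ,
      hτk.trans (hM (le_max_left _ _))⟩
  choose next τ hτC hτ hτnext using hnext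
  let r : ℕ → Ico ω ω1 := fun n => next^[n] ⟨ω, le_rfl, omega0_lt_ω1⟩
  have hr : ∀ n, r (n + 1) = next (r n) := fun n => Function.iterate_succ_apply' next n _
  have hτr : ∀ n, τ (r n) ⊆ M (r (n + 1)) := fun n => hr n ▸ hτnext (r n)
  have hU : M (⨆ n, (r n : Ordinal)) = ⋃ n, τ (r n) := by
    rw [hcont]
    refine (iUnion_mono fun n => hτ (r n)).antisymm (iUnion_subset fun n => ?_)
    exact (hτr n).trans (subset_iUnion (fun n => M (r n)) (n + 1))
  refine ⟨⨆ n, (r n : Ordinal), iSup_lt_of_lt_cof ?_ fun n => (r n).2.2, ?_⟩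
  · rw [mk_nat]
    exact aleph0_lt_cof_ω1
  · exact hU ▸ hCunion _ (fun n => hτC _) fun n => (hτr n).trans (hτ _)

noncomputable def unionChain {α : Type*} (step : Ordinal.{0} → Set α → Set α) :
    Ordinal.{0} → Set α
  | i => ⋃ j : Iio i, step j (unionChain step j)
termination_by i => i
decreasing_by exact j.2

section unionChain

variable {α : Type*} (step : Ordinal.{0} → Set α → Set α)

lemma unionChain_eq (i : Ordinal.{0}) :
    unionChain step i = ⋃ j : Iio i, step j (unionChain step j) := by
  rw [unionChain]

lemma step_subset_unionChain {i j : Ordinal.{0}} (h : j < i) :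
    step j (unionChain step j) ⊆ unionChain step i := by
  rw [unionChain_eq step i]
  exact subset_iUnion_of_subset ⟨j, h⟩ subset_rfl

lemma unionChain_mono : Monotone (unionChain step) := by
  intro i i' h x hx
  rw [unionChain_eq, mem_iUnion] at hx
  obtain ⟨⟨j, hj⟩, hx⟩ := hx
  exact step_subset_unionChain step (hj.trans_le h) hx

lemma unionChain_iSup (r : ℕ → Ordinal.{0}) :
    unionChain step (⨆ n, r n) = ⋃ n, unionChain step (r n) := by
  refine (iUnion_subset fun n => unionChain_mono step (Ordinal.le_iSup r n)).antisymm' ?_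
  intro x hx
  rw [unionChain_eq, mem_iUnion] at hx
  obtain ⟨⟨j, hj⟩, hx⟩ := hx
  obtain ⟨n, hn⟩ := Ordinal.lt_iSup_iff.1 hj
  exact mem_iUnion.2 ⟨n, step_subset_unionChain step hn hx⟩

lemma unionChain_countable (hstep : ∀ j S, S.Countable → (step j S).Countable)
    {i : Ordinal.{0}} (hi : i < ω1) : (unionChain step i).Countable := by
  induction i using WellFoundedLT.induction with
  | _ i ih =>
    have : Countable (Iio i) := (countable_Iio_of_lt_ω1 hi).to_subtype
    rw [unionChain_eq]
    exact countable_iUnion fun j => hstep _ _ (ih j j.2 (j.2.trans hi))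

end unionChain

/-- `E δ` is meant to map `ω₁` onto `δ`, `nxt b` to be a point of the club above `b`, and `W S`
an index `δ` with `S ∈ C_δ`. Intersecting with `ω₂` keeps the chain below `ω₂` without any
assumption on the values of these functions. -/
noncomputable def skolemStep (E : Ordinal.{0} → Ordinal.{0} → Ordinal.{0})
    (nxt : Ordinal.{0} → Ordinal.{0}) (W : Set Ordinal.{0} → Ordinal.{0}) (j : Ordinal.{0})
    (S : Set Ordinal.{0}) : Set Ordinal.{0} :=
  ({j, nxt (sSup S), W S} ∪ image2 E S S) ∩ Iio ω2
noncomputable def skolemChain (E : Ordinal.{0} → Ordinal.{0} → Ordinal.{0})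
    (nxt : Ordinal.{0} → Ordinal.{0}) (W : Set Ordinal.{0} → Ordinal.{0}) :
    Ordinal.{0} → Set Ordinal.{0} :=
  unionChain (skolemStep E nxt W)

noncomputable def skolemSup (E : Ordinal.{0} → Ordinal.{0} → Ordinal.{0})
    (nxt : Ordinal.{0} → Ordinal.{0}) (W : Set Ordinal.{0} → Ordinal.{0}) : Ordinal.{0} :=
  ⨆ j : Iio ω1, sSup (skolemChain E nxt W j)

section skolemChain

variable {E : Ordinal.{0} → Ordinal.{0} → Ordinal.{0}} {nxt : Ordinal.{0} → Ordinal.{0}}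
  {W : Set Ordinal.{0} → Ordinal.{0}} {i j : Ordinal.{0}}

lemma skolemChain_subset_Iio_ω2 : skolemChain E nxt W i ⊆ Iio ω2 := by
  rw [skolemChain, unionChain_eq]
  exact iUnion_subset fun _ => inter_subset_right

lemma skolemChain_mono : Monotone (skolemChain E nxt W) := unionChain_mono _

lemma mem_skolemChain_of_mem_skolemStep {x : Ordinal.{0}} (hji : j < i)
    (hx : x ∈ skolemStep E nxt W j (skolemChain E nxt W j)) : x ∈ skolemChain E nxt W i :=
  step_subset_unionChain _ hji hx

lemma mem_skolemChain_of_lt (hji : j < i) (hj : j < ω2) : j ∈ skolemChain E nxt W i :=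
  mem_skolemChain_of_mem_skolemStep hji ⟨by simp, hj⟩

lemma nxt_mem_skolemChain (hji : j < i) (h : nxt (sSup (skolemChain E nxt W j)) < ω2) :
    nxt (sSup (skolemChain E nxt W j)) ∈ skolemChain E nxt W i :=
  mem_skolemChain_of_mem_skolemStep hji ⟨by simp, h⟩

lemma W_mem_skolemChain (hji : j < i) (h : W (skolemChain E nxt W j) < ω2) :
    W (skolemChain E nxt W j) ∈ skolemChain E nxt W i :=
  mem_skolemChain_of_mem_skolemStep hji ⟨by simp, h⟩

lemma apply_mem_skolemChain {δ ξ : Ordinal.{0}} (hji : j < i) (hδ : δ ∈ skolemChain E nxt W j)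
    (hξ : ξ ∈ skolemChain E nxt W j) (h : E δ ξ < ω2) : E δ ξ ∈ skolemChain E nxt W i :=
  mem_skolemChain_of_mem_skolemStep hji ⟨Or.inr (mem_image2_of_mem hδ hξ), h⟩

lemma skolemChain_countable (hj : j < ω1) : (skolemChain E nxt W j).Countable :=
  unionChain_countable _ (fun _ _ hS => ((toFinite _).countable.union (hS.image2 hS E)).mono
    inter_subset_left) hj

lemma bddAbove_skolemChain : BddAbove (skolemChain E nxt W j) :=
  ⟨ω2, fun _ hx => (skolemChain_subset_Iio_ω2 hx).le⟩

lemma sSup_skolemChain_lt_ω2 (hj : j < ω1) : sSup (skolemChain E nxt W j) < ω2 :=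
  (skolemChain_countable hj).sSup_lt aleph0_lt_cof_ω2 fun _ hx => skolemChain_subset_Iio_ω2 hx

lemma strictMono_sSup_skolemChain (hnxt : ∀ b < ω2, nxt b ∈ Ioo b ω2) :
    StrictMono fun j : Iio ω1 => sSup (skolemChain E nxt W j) := by
  rintro ⟨j, hj⟩ ⟨k, hk⟩ (hjk : j < k)
  have hb : nxt (sSup (skolemChain E nxt W j)) ∈ Ioo _ ω2 := hnxt _ (sSup_skolemChain_lt_ω2 hj)
  exact hb.1.trans_le (le_csSup bddAbove_skolemChain (nxt_mem_skolemChain hjk hb.2))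

lemma skolemChain_subset_Iio_skolemSup (hnxt : ∀ b < ω2, nxt b ∈ Ioo b ω2) (hj : j < ω1) :
    skolemChain E nxt W j ⊆ Iio (skolemSup E nxt W) := by
  intro x hx
  have hj1 : j + 1 < ω1 := isSuccLimit_ω1.add_one_lt hj
  calc x ≤ sSup (skolemChain E nxt W j) := le_csSup bddAbove_skolemChain hx
    _ < sSup (skolemChain E nxt W (j + 1)) :=
      strictMono_sSup_skolemChain hnxt (show (⟨j, hj⟩ : Iio ω1) < ⟨j + 1, hj1⟩ from lt_add_one j)
    _ ≤ skolemSup E nxt W :=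
      Ordinal.le_iSup (fun k : Iio ω1 => sSup (skolemChain E nxt W k)) ⟨j + 1, hj1⟩

lemma exists_mem_skolemChain_of_lt_skolemSup (hE : ∀ δ < ω2, SurjOn (E δ) (Iio ω1) (Iio δ))
    {η : Ordinal.{0}} (hη : η < skolemSup E nxt W) : ∃ j < ω1, η ∈ skolemChain E nxt W j := by
  obtain ⟨⟨j, hj⟩, hηj⟩ := Ordinal.lt_iSup_iff.1 hη
  obtain ⟨ρ, hρ, hηρ⟩ := exists_lt_of_lt_csSup' hηj
  have hρω2 : ρ < ω2 := skolemChain_subset_Iio_ω2 hρ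
  obtain ⟨ξ, hξ, rfl⟩ := hE ρ hρω2 hηρ
  have hk : max j (ξ + 1) < ω1 := max_lt hj (isSuccLimit_ω1.add_one_lt hξ)
  refine ⟨max j (ξ + 1) + 1, isSuccLimit_ω1.add_one_lt hk, apply_mem_skolemChain (lt_add_one _)
    (skolemChain_mono (le_max_left _ _) hρ) ?_ (hηρ.trans hρω2)⟩
  exact mem_skolemChain_of_lt ((lt_add_one ξ).trans_le (le_max_right _ _)) (hξ.trans ω1_lt_ω2)

lemma cof_skolemSup (hnxt : ∀ b < ω2, nxt b ∈ Ioo b ω2) : (skolemSup E nxt W).cof = ℵ₁ := by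
  rw [skolemSup, cof_iSup_Iio (strictMono_sSup_skolemChain hnxt) isSuccLimit_ω1.isSuccPrelimit,
    cof_ω1]

lemma skolemSup_lt_ω2 : skolemSup E nxt W < ω2 := by
  refine lift_iSup_lt_of_lt_cof ?_ fun j => sSup_skolemChain_lt_ω2 j.2
  simp [Cardinal.mk_Iio_ordinal, ← lift_cof, cof_ω2, ω1_eq_omega_one, card_omega]

lemma skolemSup_mem {D : Set Ordinal.{0}} (hD : IsClubBelow ω2 D)
    (hnxt : ∀ b < ω2, nxt b ∈ Ioo b ω2) (hnxtD : ∀ b < ω2, nxt b ∈ D) :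
    skolemSup E nxt W ∈ D := by
  refine hD.mem_of_forall_lt_exists_mem skolemSup_lt_ω2 ?_ fun x hx => ?_
  · exact (cof_pos.1 ((cof_skolemSup hnxt).symm ▸ aleph_pos 1)).ne'
  obtain ⟨⟨j, hj⟩, hxj⟩ := Ordinal.lt_iSup_iff.1 hx
  have hb : sSup (skolemChain E nxt W j) < ω2 := sSup_skolemChain_lt_ω2 hj
  exact ⟨_, hnxtD _ hb, hxj.trans (hnxt _ hb).1, skolemChain_subset_Iio_skolemSup hnxt
    (isSuccLimit_ω1.add_one_lt hj) (nxt_mem_skolemChain (lt_add_one j) (hnxt _ hb).2)⟩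

lemma exists_skolemChain_mem_of_isClubIn (hE : ∀ δ < ω2, SurjOn (E δ) (Iio ω1) (Iio δ))
    (hnxt : ∀ b < ω2, nxt b ∈ Ioo b ω2) {C : Set (Set Ordinal.{0})}
    (hC : IsClubIn (skolemSup E nxt W) C) : ∃ j < ω1, skolemChain E nxt W j ∈ C := by
  refine hC.exists_mem_of_continuous skolemChain_mono (unionChain_iSup _) (fun j hj => ?_)
    fun σ hσ => skolemChain_mono.exists_lt_ω1_subset_of_countable hσ.1
      fun x hx => exists_mem_skolemChain_of_lt_skolemSup hE (hσ.2.2 x hx)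
  refine ⟨skolemChain_countable hj.2, infinite_Iio_omega0.mono fun x hx => ?_,
    fun x hx => skolemChain_subset_Iio_skolemSup hnxt hj.2 hx⟩
  exact mem_skolemChain_of_lt (hx.trans_le hj.1) (hx.trans (omega0_lt_ω1.trans ω1_lt_ω2))

end skolemChain

theorem disjoint_club_sequence_no_club_general (A : Set Ordinal.{0})
    (C : Ordinal.{0} → Set (Set Ordinal.{0}))
    (hclub : ∀ α ∈ A, IsClubIn α (C α))
    (hdisj : ∀ α ∈ A, ∀ β ∈ A, α ≠ β → Disjoint (C α) (C β)) :
    ¬ ∃ D, IsClubBelow ω2 D ∧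
      D ⊆ A ∪ {γ | γ < ω2 ∧ Ordinal.cof γ = Cardinal.aleph0} := by
  rintro ⟨D, hD, hDA⟩
  choose! E hE using fun δ (hδ : δ < ω2) => exists_surjOn_Iio_of_card_le (card_le_card_ω1 hδ)
  choose! nxt hnxtD hnxt using fun b (hb : b < ω2) => hD.exists_mem_gt isSuccLimit_ω2 hb
  replace hnxt : ∀ b < ω2, nxt b ∈ Ioo b ω2 := fun b hb => ⟨hnxt b hb, hD.1 _ (hnxtD b hb)⟩
  let W : Set Ordinal.{0} → Ordinal.{0} := fun σ => Classical.epsilon fun δ => δ ∈ A ∧ σ ∈ C δ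
  set β := skolemSup E nxt W
  have hβA : β ∈ A := (hDA (skolemSup_mem hD hnxt hnxtD)).resolve_right fun h =>
    aleph0_lt_aleph_one.ne' ((cof_skolemSup hnxt).symm.trans h.2)
  obtain ⟨j, hj, hjC⟩ := exists_skolemChain_mem_of_isClubIn hE hnxt (hclub β hβA)
  have hW : W (skolemChain E nxt W j) = β := by
    obtain ⟨hWA, hWC⟩ :=
      Classical.epsilon_spec (p := fun δ => δ ∈ A ∧ skolemChain E nxt W j ∈ C δ) ⟨β, hβA, hjC⟩
    by_contra hne
    exact disjoint_left.1 (hdisj _ hWA β hβA hne) hWC hjC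
  have hβ : β ∈ skolemChain E nxt W (j + 1) :=
    hW ▸ W_mem_skolemChain (lt_add_one j) (hW ▸ skolemSup_lt_ω2)
  exact lt_irrefl β (skolemChain_subset_Iio_skolemSup hnxt (isSuccLimit_ω1.add_one_lt hj) hβ)

theorem disjoint_club_sequence_no_club (A : Set Ordinal.{0})
    (C : Ordinal.{0} → Set (Set Ordinal.{0}))
    (hA : ∀ α ∈ A, α < ω2 ∧ Ordinal.cof α = Cardinal.aleph 1)
    (hclub : ∀ α ∈ A, IsClubIn α (C α))
    (hdisj : ∀ α ∈ A, ∀ β ∈ A, α ≠ β → Disjoint (C α) (C β)) :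
    ¬ ∃ D, IsClubBelow ω2 D ∧
      D ⊆ A ∪ {γ | γ < ω2 ∧ Ordinal.cof γ = Cardinal.aleph0} :=
  disjoint_club_sequence_no_club_general A C hclub hdisj
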